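/- arXiv:2311.11946 — 3 statements merged into one kernel-verified Lean document; each statement's English description precedes it below -/
import Mathlib

section
/- For every prime p and every positive integer h with gcd(h,p)=1, the arithmetic progression {p·n + h : n ∈ ℕ ∪ {0}} contains infinitely many prime numbers. -/
def A (h k : ℕ) : Set ℕ := {m | ∃ n : ℕ, m = k * n + h}

theorem mem_A_iff {h k m : ℕ} : m ∈ A h k ↔ h ≤ m ∧ m ≡ h [MOD k] := by
  constructor
  · rintro ⟨n, rfl⟩
    exact ⟨Nat.le_add_left h _, by simp [Nat.ModEq]⟩
  · rintro ⟨hhm, hmod⟩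
    obtain ⟨n, hn⟩ := (Nat.modEq_iff_dvd' hhm).mp hmod.symm
    exact ⟨n, by omega⟩

/-- Dirichlet's theorem for the residue class of `h` mod `k` loses only the finitely many primes
below `h`, where `A h k` starts. -/
theorem infinite_setOf_prime_mem_A {h k : ℕ} (hk : k ≠ 0) (hco : h.Coprime k) :
    {q : ℕ | q.Prime ∧ q ∈ A h k}.Infinite := by
  refine ((Nat.infinite_setOfPred_prime_and_modEq hk hco).sdiff (Set.finite_Iio h)).mono ?_
  rintro q ⟨⟨hq, hmod⟩, hqh⟩
  exact ⟨hq, mem_A_iff.mpr ⟨not_lt.mp hqh, hmod⟩⟩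

theorem stmt_0_general (p h : ℕ) (hp : p.Prime) (hco : Nat.gcd h p = 1) :
    {q : ℕ | q.Prime ∧ q ∈ A h p}.Infinite :=
  infinite_setOf_prime_mem_A hp.ne_zero hco

theorem stmt_0 (p h : ℕ) (hp : p.Prime) (hh : 0 < h) (hco : Nat.gcd h p = 1) :
    {q : ℕ | q.Prime ∧ q ∈ A h p}.Infinite :=
  stmt_0_general p h hp hco
end

section
/- Suppose that for every squarefree integer k that is a product of distinct odd primes with k > s (where s bounds infinitely many prime gaps), every progression A(h,k) with gcd(h,k)=1 contains infinitely many primes. Then for every prime p and every h with gcd(h,p)=1, the progression A(h,p) contains infinitely many primes. -/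
noncomputable def p (n : ℕ) : ℕ := Nat.nth Nat.Prime n

theorem stmt_13 (s : ℕ) (hgap : ∀ N, ∃ n ≥ N, p (n + 1) - p n ≤ s)
    (H : ∀ k : ℕ, Squarefree k → (∀ q ∈ k.primeFactors, Odd q) → s < k →
      ∀ h : ℕ, 0 < h → Nat.gcd h k = 1 → {m ∈ A h k | m.Prime}.Infinite) :
    ∀ q : ℕ, q.Prime → ∀ h : ℕ, 0 < h → Nat.gcd h q = 1 →
      {m ∈ A h q | m.Prime}.Infinite := by
  intro q hq h hh hcop
  rcases eq_or_ne q 2 with rfl | hq2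
  · -- case q = 2 : all odd primes large enough are in A h 2
    have hho : h % 2 = 1 := by
      rcases Nat.mod_two_eq_zero_or_one h with h0 | h1
      · exfalso
        have : 2 ∣ Nat.gcd h 2 := Nat.dvd_gcd (Nat.dvd_of_mod_eq_zero h0) dvd_rfl
        omega
      · exact h1
    have hinf : ({m | m.Prime} \ Set.Iic (h + 1)).Infinite :=
      Nat.infinite_setOf_prime.diff (Set.finite_Iic _)
    refine hinf.mono ?_
    rintro m ⟨hm, hm2⟩
    simp only [Set.mem_Iic, not_le] at hm2
    have hmo : m % 2 = 1 := Nat.odd_iff.mp (hm.odd_of_ne_two (by omega))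
    exact ⟨⟨(m - h) / 2, by omega⟩, hm⟩
  · -- q odd prime
    have hqodd : Odd q := hq.odd_of_ne_two hq2
    obtain ⟨r, hrge, hr⟩ := Nat.exists_infinite_primes (max s q + 1)
    have hrs : s < r := by omega
    have hrq : q < r := by omega
    have hrne : r ≠ q := by omega
    have hr2 : 2 < r := by have := hq.two_le; omega
    have hrodd : Odd r := hr.odd_of_ne_two (by omega)
    have hcoprqr : Nat.Coprime q r := (Nat.coprime_primes hq hr).mpr (Ne.symm hrne)
    -- choose t so that h + q*t ≡ 1 mod r
    haveI : Fact (Nat.Prime r) := ⟨hr⟩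
    have hqne0 : (q : ZMod r) ≠ 0 := by
      intro h0
      exact hrne ((Nat.prime_dvd_prime_iff_eq hr hq).mp
        ((ZMod.natCast_eq_zero_iff q r).mp h0))
    set t : ℕ := ((1 - (h : ZMod r)) * (q : ZMod r)⁻¹).val with ht
    have hmodr : ((h + q * t : ℕ) : ZMod r) = 1 := by
      push_cast [ht]
      rw [ZMod.natCast_val, ZMod.cast_id]
      field_simp
      ring
    set h' : ℕ := h + q * t with hh'
    have hcop1 : Nat.Coprime h' q := by
      rw [hh', Nat.coprime_add_mul_left_left]
      exact hcop
    have hcop2 : Nat.Coprime h' r := by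
      rw [Nat.coprime_comm, hr.coprime_iff_not_dvd]
      intro hd
      have h0 : ((h' : ℕ) : ZMod r) = 0 := (ZMod.natCast_eq_zero_iff _ _).mpr hd
      rw [h0] at hmodr
      exact one_ne_zero hmodr.symm
    have hk : {m ∈ A h' (q * r) | m.Prime}.Infinite := by
      refine H (q * r) ?_ ?_ ?_ h' (by positivity) (Nat.Coprime.mul_right hcop1 hcop2)
      · exact (Nat.squarefree_mul hcoprqr).mpr ⟨hq.squarefree, hr.squarefree⟩
      · intro x hx
        rw [Nat.primeFactors_mul hq.pos.ne' hr.pos.ne', hq.primeFactors,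
          hr.primeFactors] at hx
        simp only [Finset.mem_union, Finset.mem_singleton] at hx
        rcases hx with rfl | rfl
        · exact hqodd
        · exact hrodd
      · calc s < r := hrs
          _ = 1 * r := (one_mul r).symm
          _ ≤ q * r := Nat.mul_le_mul_right r hq.one_lt.le
    refine hk.mono ?_
    rintro m ⟨⟨n, rfl⟩, hm⟩
    exact ⟨⟨r * n + t, by ring⟩, hm⟩
end

section
/- Theorem (Kirch density): the set of prime numbers is dense in the positive integers equipped with the Kirch topology (the topology generated by the arithmetic progressions A(h,p) with p prime and gcd(h,p)=1 as a subbasis). -/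
def PosNat : Type := {n : ℕ // 0 < n}

def Ap (h p : ℕ) : Set PosNat := {m | ∃ n : ℕ, m.val = p * n + h}

noncomputable def kirch : TopologicalSpace PosNat :=
  TopologicalSpace.generateFrom
    {S | ∃ p h : ℕ, p.Prime ∧ Nat.gcd h p = 1 ∧ S = Ap h p}

/-! Every Kirch-open set contains, around each of its points `x`, all sufficiently large
members of some residue class `x mod q` with `x` coprime to `q`: this holds for the subbasic
progressions and survives finite intersections (multiply the moduli) and unions. By Dirichlet's
theorem such a class contains arbitrarily large primes. -/

namespace PosNat

def ResidueOpen (U : Set PosNat) : Prop :=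
  ∀ x ∈ U, ∃ q : ℕ, 0 < q ∧ Nat.Coprime x.val q ∧
    ∃ N : ℕ, ∀ m : PosNat, N ≤ m.val → m.val ≡ x.val [MOD q] → m ∈ U

theorem residueOpen_ap {h p : ℕ} (hp : 0 < p) (hhp : Nat.gcd h p = 1) :
    ResidueOpen (Ap h p) := by
  rintro x ⟨n, hxn⟩
  have hxh : x.val ≡ h [MOD p] := by rw [hxn, Nat.ModEq, Nat.mul_add_mod]
  refine ⟨p, hp, ?_, h, fun m hhm hmx => ?_⟩
  · rw [Nat.Coprime, Nat.ModEq.gcd_eq hxh, hhp]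
  · obtain ⟨k, hk⟩ := (Nat.modEq_iff_dvd' hhm).mp (hmx.trans hxh).symm
    exact ⟨k, by omega⟩

theorem residueOpen_univ : ResidueOpen Set.univ :=
  fun _ _ => ⟨1, one_pos, Nat.coprime_one_right _, 0, fun _ _ _ => trivial⟩

theorem ResidueOpen.inter {U V : Set PosNat} (hU : ResidueOpen U) (hV : ResidueOpen V) :
    ResidueOpen (U ∩ V) := by
  rintro x ⟨hxU, hxV⟩
  obtain ⟨q, hq, hxq, N, hN⟩ := hU x hxU
  obtain ⟨r, hr, hxr, M, hM⟩ := hV x hxV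
  refine ⟨q * r, Nat.mul_pos hq hr, hxq.mul_right hxr, max N M, fun m hm hmx => ⟨?_, ?_⟩⟩
  · exact hN m (le_of_max_le_left hm) (hmx.of_mul_right r)
  · exact hM m (le_of_max_le_right hm) (hmx.of_mul_left q)

theorem residueOpen_sUnion {S : Set (Set PosNat)} (hS : ∀ U ∈ S, ResidueOpen U) :
    ResidueOpen (⋃₀ S) := by
  rintro x ⟨U, hUS, hxU⟩
  obtain ⟨q, hq, hxq, N, hN⟩ := hS U hUS x hxU
  exact ⟨q, hq, hxq, N, fun m hm hmx => ⟨U, hUS, hN m hm hmx⟩⟩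

theorem residueOpen_of_isOpen_kirch {U : Set PosNat} (hU : @IsOpen PosNat kirch U) :
    ResidueOpen U := by
  induction hU with
  | basic U hU =>
    obtain ⟨p, h, hp, hhp, rfl⟩ := hU
    exact residueOpen_ap hp.pos hhp
  | univ => exact residueOpen_univ
  | inter U V _ _ hU hV => exact hU.inter hV
  | sUnion S _ hS => exact residueOpen_sUnion hS

theorem ResidueOpen.exists_prime_mem {U : Set PosNat} (hU : ResidueOpen U) {x : PosNat}
    (hx : x ∈ U) : ∃ m ∈ U, m.val.Prime := by
  obtain ⟨q, hq, hxq, N, hN⟩ := hU x hx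
  have : NeZero q := ⟨hq.ne'⟩
  have hunit : IsUnit (x.val : ZMod q) := (ZMod.isUnit_iff_coprime _ _).mpr hxq
  obtain ⟨p, hNp, hp, hpx⟩ := Nat.forall_exists_prime_gt_and_eq_mod hunit N
  exact ⟨⟨p, hp.pos⟩, hN ⟨p, hp.pos⟩ hNp.le ((ZMod.natCast_eq_natCast_iff _ _ _).mp hpx), hp⟩

end PosNat

theorem stmt_18 : @Dense PosNat kirch {q : PosNat | Nat.Prime q.val} := by
  let _ : TopologicalSpace PosNat := kirch
  refine dense_iff_inter_open.mpr fun U hU ⟨x, hx⟩ => ?_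
  obtain ⟨m, hmU, hm⟩ := (PosNat.residueOpen_of_isOpen_kirch hU).exists_prime_mem hx
  exact ⟨m, hmU, hm⟩
end
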